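/- arXiv:1112.1629 — 6 statements merged into one kernel-verified Lean document; each statement's English description precedes it below -/
import Mathlib

section
/- For any k ≥ 1, the difference set of the k-free integers is all of ℤ: for every a ∈ ℤ there exist k-free integers x and y with x − y = a. -/
open Finset

/-- Telescoping bound: the odd tail sum. -/
lemma kfree_aux_tail (J : ℕ) :
    ∑ j ∈ Finset.range J, (1 : ℚ) / ((2*(j:ℚ)+5)*(2*(j:ℚ)+5)) ≤ 1/8 := by
  have key : ∑ j ∈ Finset.range J, (1 : ℚ) / ((2*(j:ℚ)+5)*(2*(j:ℚ)+5)) ≤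
      ∑ j ∈ Finset.range J,
        ((fun i : ℕ => 1/(4*((i:ℚ)+2))) j - (fun i : ℕ => 1/(4*((i:ℚ)+2))) (j+1)) := by
    apply Finset.sum_le_sum
    intro j _
    have hj : (0:ℚ) ≤ (j:ℚ) := Nat.cast_nonneg j
    simp only
    rw [div_sub_div _ _ (by positivity) (by positivity),
      div_le_div_iff₀ (by positivity) (by positivity)]
    push_cast
    nlinarith [sq_nonneg ((j:ℚ))]
  rw [Finset.sum_range_sub' (f := fun i : ℕ => 1/(4*((i:ℚ)+2))) J] at key
  have h0 : (0:ℚ) ≤ 1/(4*((J:ℚ)+2)) := by positivity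
  calc ∑ j ∈ Finset.range J, (1 : ℚ) / ((2*(j:ℚ)+5)*(2*(j:ℚ)+5))
      ≤ (fun i : ℕ => 1/(4*((i:ℚ)+2))) 0 - (fun i : ℕ => 1/(4*((i:ℚ)+2))) J := key
    _ = 1/8 - 1/(4*((J:ℚ)+2)) := by norm_num
    _ ≤ 1/8 := by linarith

/-- Sum of reciprocals of squares of primes is at most 35/72. -/
lemma kfree_aux_prime_sum (M : ℕ) :
    ∑ p ∈ Nat.primesBelow M, (1:ℚ)/((p:ℚ)*(p:ℚ)) ≤ 35/72 := by
  have hnonneg : ∀ p : ℕ, 0 ≤ (1:ℚ)/((p:ℚ)*(p:ℚ)) := by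
    intro p; positivity
  rw [← Finset.sum_filter_add_sum_filter_not (Nat.primesBelow M) (fun p => p < 5)]
  have h1 : ∑ p ∈ (Nat.primesBelow M).filter (fun p => p < 5), (1:ℚ)/((p:ℚ)*(p:ℚ)) ≤ 13/36 := by
    have hsub : (Nat.primesBelow M).filter (fun p => p < 5) ⊆ ({2, 3} : Finset ℕ) := by
      intro p hp
      simp only [Finset.mem_filter] at hp
      have hp5 := hp.2
      have hpp := Nat.prime_of_mem_primesBelow hp.1
      interval_cases p <;> simp_all (config := {decide := true})
    calc ∑ p ∈ (Nat.primesBelow M).filter (fun p => p < 5), (1:ℚ)/((p:ℚ)*(p:ℚ))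
        ≤ ∑ p ∈ ({2,3} : Finset ℕ), (1:ℚ)/((p:ℚ)*(p:ℚ)) :=
          Finset.sum_le_sum_of_subset_of_nonneg hsub (fun i _ _ => hnonneg i)
      _ = 13/36 := by norm_num
  have h2 : ∑ p ∈ (Nat.primesBelow M).filter (fun p => ¬ p < 5), (1:ℚ)/((p:ℚ)*(p:ℚ)) ≤ 1/8 := by
    set S := (Nat.primesBelow M).filter (fun p => ¬ p < 5) with hS
    have hodd : ∀ p ∈ S, 2*((p-5)/2) + 5 = p := by
      intro p hp
      simp only [hS, Finset.mem_filter] at hp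
      have hpp := Nat.prime_of_mem_primesBelow hp.1
      have h5 : 5 ≤ p := by omega
      have hodd' : p % 2 = 1 := Nat.odd_iff.mp (hpp.odd_of_ne_two (by omega))
      omega
    have hinj : ∀ x ∈ S, ∀ y ∈ S, (x-5)/2 = (y-5)/2 → x = y := by
      intro x hx y hy hxy
      have h1 := hodd x hx
      have h2 := hodd y hy
      omega
    have himg : ∑ p ∈ S, (1:ℚ)/((p:ℚ)*(p:ℚ))
        = ∑ j ∈ S.image (fun p : ℕ => ((p-5)/2 : ℕ)), (1:ℚ)/((2*(j:ℚ)+5)*(2*(j:ℚ)+5)) := by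
      rw [Finset.sum_image hinj]
      apply Finset.sum_congr rfl
      intro p hp
      have h := hodd p hp
      have hc : 2*(((p-5)/2 : ℕ):ℚ)+5 = (p:ℚ) := by
        exact_mod_cast congrArg (Nat.cast : ℕ → ℚ) h
      rw [hc]
    rw [himg]
    have hsub : S.image (fun p : ℕ => ((p-5)/2 : ℕ)) ⊆ Finset.range M := by
      intro j hj
      simp only [Finset.mem_image] at hj
      obtain ⟨p, hp, rfl⟩ := hj
      simp only [hS, Finset.mem_filter] at hp
      have := Nat.lt_of_mem_primesBelow hp.1
      simp only [Finset.mem_range]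
      omega
    calc ∑ j ∈ S.image (fun p : ℕ => ((p-5)/2 : ℕ)), (1:ℚ)/((2*(j:ℚ)+5)*(2*(j:ℚ)+5))
        ≤ ∑ j ∈ Finset.range M, (1:ℚ)/((2*(j:ℚ)+5)*(2*(j:ℚ)+5)) := by
          apply Finset.sum_le_sum_of_subset_of_nonneg hsub
          intro j _ _; positivity
      _ ≤ 1/8 := kfree_aux_tail M
  linarith

/-- Counting multiples of `d` in a shifted interval. -/
lemma kfree_aux_count (N d a : ℕ) (hd : 0 < d) :
    ((Finset.Ioc 0 N).filter (fun n => d ∣ n + a)).card ≤ N / d + 1 := by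
  have himage : ((Finset.Ioc 0 N).filter (fun n => d ∣ n + a)).image (· + a)
      = (Finset.Ioc a (N + a)).filter (fun m => d ∣ m) := by
    ext m
    simp only [Finset.mem_image, Finset.mem_filter, Finset.mem_Ioc]
    constructor
    · rintro ⟨n, ⟨⟨h1, h2⟩, h3⟩, rfl⟩; exact ⟨⟨by omega, by omega⟩, h3⟩
    · rintro ⟨⟨h1, h2⟩, h3⟩
      exact ⟨m - a, ⟨⟨by omega, by omega⟩, by rwa [Nat.sub_add_cancel (by omega)]⟩, by omega⟩
  have hcard : ((Finset.Ioc 0 N).filter (fun n => d ∣ n + a)).card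
      = ((Finset.Ioc a (N + a)).filter (fun m => d ∣ m)).card := by
    rw [← himage, Finset.card_image_of_injective _ (add_left_injective a)]
  have hsplit : (Finset.Ioc 0 (N+a)).filter (fun m => d ∣ m)
      = (Finset.Ioc 0 a).filter (fun m => d ∣ m) ∪ (Finset.Ioc a (N+a)).filter (fun m => d ∣ m) := by
    rw [← Finset.filter_union]
    congr 1
    ext m
    simp only [Finset.mem_union, Finset.mem_Ioc]
    omega
  have hdisj : Disjoint ((Finset.Ioc 0 a).filter (fun m => d ∣ m))
      ((Finset.Ioc a (N+a)).filter (fun m => d ∣ m)) := by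
    apply Finset.disjoint_filter_filter
    rw [Finset.disjoint_left]
    intro m h1 h2
    simp only [Finset.mem_Ioc] at h1 h2
    omega
  have hadd : (N+a)/d = a/d + ((Finset.Ioc a (N+a)).filter (fun m => d ∣ m)).card := by
    rw [← Nat.Ioc_filter_dvd_card_eq_div (N+a) d, ← Nat.Ioc_filter_dvd_card_eq_div a d,
      hsplit, Finset.card_union_of_disjoint hdisj]
  have hineq : (N+a)/d < a/d + N/d + 2 := by
    rw [Nat.div_lt_iff_lt_mul hd]
    have h1 := Nat.div_add_mod a d
    have h2 := Nat.div_add_mod N d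
    have h3 := Nat.mod_lt a hd
    have h4 := Nat.mod_lt N hd
    nlinarith
  omega

/-- Main counting lemma: squarefree pairs with fixed difference exist. -/
lemma kfree_aux_main (a : ℕ) : ∃ n : ℕ, 0 < n ∧ Squarefree n ∧ Squarefree (n + a) := by
  set N := 36 * (a + 37)^2 with hN
  set M := Nat.sqrt (N + a) + 1 with hM
  set B := (Finset.Ioc 0 N).filter (fun n => ¬ Squarefree n ∨ ¬ Squarefree (n+a)) with hB
  have hsubset : B ⊆ (Nat.primesBelow M).biUnion
      (fun p => (Finset.Ioc 0 N).filter (fun n => p*p ∣ n ∨ p*p ∣ (n+a))) := by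
    intro n hn
    simp only [hB, Finset.mem_filter, Finset.mem_Ioc] at hn
    obtain ⟨⟨hn0, hnN⟩, hcase⟩ := hn
    have key : ∃ p : ℕ, p.Prime ∧ (p*p ∣ n ∨ p*p ∣ n + a) := by
      rcases hcase with h | h
      · rw [Nat.squarefree_iff_prime_squarefree] at h
        push_neg at h
        obtain ⟨p, hp, hdvd⟩ := h
        exact ⟨p, by exact hp, Or.inl hdvd⟩
      · rw [Nat.squarefree_iff_prime_squarefree] at h
        push_neg at h
        obtain ⟨p, hp, hdvd⟩ := h
        exact ⟨p, by exact hp, Or.inr hdvd⟩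
    obtain ⟨p, hp, hdvd⟩ := key
    have hppN : p * p ≤ N + a := by
      rcases hdvd with h | h
      · exact le_trans (Nat.le_of_dvd (by omega) h) (by omega)
      · exact le_trans (Nat.le_of_dvd (by omega) h) (by omega)
    have hpM : p < M := by
      rw [hM]
      have : p ≤ Nat.sqrt (N + a) := Nat.le_sqrt.mpr hppN
      omega
    apply Finset.mem_biUnion.mpr
    exact ⟨p, Nat.mem_primesBelow.mpr ⟨hpM, hp⟩,
      Finset.mem_filter.mpr ⟨Finset.mem_Ioc.mpr ⟨hn0, hnN⟩, hdvd⟩⟩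
  have hprime_count : ∀ p ∈ Nat.primesBelow M,
      ((Finset.Ioc 0 N).filter (fun n => p*p ∣ n ∨ p*p ∣ (n+a))).card
        ≤ 2*(N/(p*p)) + 1 := by
    intro p hp
    have hppos : 0 < p * p := by
      have := (Nat.prime_of_mem_primesBelow hp).pos
      positivity
    calc ((Finset.Ioc 0 N).filter (fun n => p*p ∣ n ∨ p*p ∣ (n+a))).card
        ≤ ((Finset.Ioc 0 N).filter (fun n => p*p ∣ n)).card
          + ((Finset.Ioc 0 N).filter (fun n => p*p ∣ (n+a))).card := by
          rw [Finset.filter_or]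
          exact Finset.card_union_le _ _
      _ ≤ N/(p*p) + (N/(p*p) + 1) := by
          gcongr
          · exact le_of_eq (Nat.Ioc_filter_dvd_card_eq_div N (p*p))
          · exact kfree_aux_count N (p*p) a hppos
      _ = 2*(N/(p*p)) + 1 := by ring
  have hcardB : B.card ≤ ∑ p ∈ Nat.primesBelow M, (2*(N/(p*p)) + 1) :=
    calc B.card ≤ _ := Finset.card_le_card hsubset
      _ ≤ ∑ p ∈ Nat.primesBelow M,
          ((Finset.Ioc 0 N).filter (fun n => p*p ∣ n ∨ p*p ∣ (n+a))).card :=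
          Finset.card_biUnion_le
      _ ≤ ∑ p ∈ Nat.primesBelow M, (2*(N/(p*p)) + 1) :=
          Finset.sum_le_sum hprime_count
  have h36 : 36 * M < N := by
    have hsq : Nat.sqrt (N + a) < 6*(a+37) + 1 := by
      rw [Nat.sqrt_lt']
      rw [hN]
      nlinarith
    rw [hM, hN]
    nlinarith
  have hQ : (B.card : ℚ) < (N : ℚ) := by
    have h1 : (B.card : ℚ) ≤ ∑ p ∈ Nat.primesBelow M, ((2*(N/(p*p)) + 1 : ℕ) : ℚ) := by
      rw [← Nat.cast_sum]
      exact_mod_cast hcardB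
    have h2 : ∀ p ∈ Nat.primesBelow M,
        ((2*(N/(p*p)) + 1 : ℕ) : ℚ) ≤ 2*(N:ℚ)*((1:ℚ)/((p:ℚ)*(p:ℚ))) + 1 := by
      intro p hp
      have hc : ((N/(p*p) : ℕ) : ℚ) ≤ (N:ℚ)/(((p:ℚ))*((p:ℚ))) := by
        calc ((N/(p*p) : ℕ) : ℚ) ≤ (N:ℚ)/((p*p : ℕ):ℚ) := Nat.cast_div_le
          _ = (N:ℚ)/(((p:ℚ))*((p:ℚ))) := by push_cast; ring
      push_cast
      have : 2*(N:ℚ)*((1:ℚ)/((p:ℚ)*(p:ℚ))) = 2*((N:ℚ)/((p:ℚ)*(p:ℚ))) := by ring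
      rw [this]
      linarith
    have h3 : (B.card : ℚ) ≤ 2*(N:ℚ)*(∑ p ∈ Nat.primesBelow M, (1:ℚ)/((p:ℚ)*(p:ℚ)))
        + (Nat.primesBelow M).card := by
      calc (B.card : ℚ) ≤ ∑ p ∈ Nat.primesBelow M, ((2*(N/(p*p)) + 1 : ℕ) : ℚ) := h1
        _ ≤ ∑ p ∈ Nat.primesBelow M, (2*(N:ℚ)*((1:ℚ)/((p:ℚ)*(p:ℚ))) + 1) :=
            Finset.sum_le_sum h2
        _ = 2*(N:ℚ)*(∑ p ∈ Nat.primesBelow M, (1:ℚ)/((p:ℚ)*(p:ℚ)))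
            + (Nat.primesBelow M).card := by
            rw [Finset.sum_add_distrib, ← Finset.mul_sum]
            simp
    have hcardP : ((Nat.primesBelow M).card : ℚ) ≤ (M : ℚ) := by
      have : (Nat.primesBelow M).card ≤ M := by
        calc (Nat.primesBelow M).card ≤ (Finset.range M).card :=
            Finset.card_le_card (Finset.filter_subset _ _)
          _ = M := Finset.card_range M
      exact_mod_cast this
    have hsum := kfree_aux_prime_sum M
    have hNpos : (0:ℚ) ≤ (N:ℚ) := Nat.cast_nonneg N
    have h36' : 36 * (M:ℚ) < (N:ℚ) := by exact_mod_cast h36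
    calc (B.card : ℚ) ≤ 2*(N:ℚ)*(∑ p ∈ Nat.primesBelow M, (1:ℚ)/((p:ℚ)*(p:ℚ)))
        + (Nat.primesBelow M).card := h3
      _ ≤ 2*(N:ℚ)*(35/72) + (M:ℚ) :=
          add_le_add (mul_le_mul_of_nonneg_left hsum (by positivity)) hcardP
      _ < (N:ℚ) := by linarith
  have hcardB' : B.card < N := by exact_mod_cast hQ
  have hnotsub : ¬ (Finset.Ioc 0 N ⊆ B) := by
    intro hss
    have := Finset.card_le_card hss
    rw [Nat.card_Ioc] at this
    omega
  rw [Finset.not_subset] at hnotsub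
  obtain ⟨n, hnmem, hnB⟩ := hnotsub
  refine ⟨n, ?_, ?_, ?_⟩
  · exact (Finset.mem_Ioc.mp hnmem).1
  all_goals {
    by_contra h
    apply hnB
    rw [hB, Finset.mem_filter]
    exact ⟨hnmem, by tauto⟩
  }

/-- An integer `n` is `k`-free if `n ≠ 0` and `p^k ∤ n` for every prime `p`. -/
def KFreeInt (k : ℕ) (n : ℤ) : Prop :=
  n ≠ 0 ∧ ∀ p : ℕ, p.Prime → ¬ ((p : ℤ)^k ∣ n)

lemma kfree_of_squarefree (k : ℕ) (hk : 2 ≤ k) (n : ℕ) (hn : n ≠ 0)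
    (h : Squarefree n) : KFreeInt k (n : ℤ) := by
  constructor
  · exact_mod_cast hn
  · intro p hp hdvd
    have h1 : ((p^k : ℕ) : ℤ) ∣ (n : ℤ) := by push_cast; exact hdvd
    have h2 : p^k ∣ n := Int.natCast_dvd_natCast.mp h1
    have h3 : p*p ∣ n := dvd_trans (by
      have : p^2 ∣ p^k := pow_dvd_pow p hk
      rwa [pow_two] at this) h2
    exact hp.one_lt.ne' (Nat.isUnit_iff.mp (h p h3))

/-- For `k ≥ 2`, the difference set of the `k`-free integers is all of `ℤ`. -/
theorem kfree_difference_set_eq_univ (k : ℕ) (hk : 2 ≤ k) (a : ℤ) :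
    ∃ x y : ℤ, KFreeInt k x ∧ KFreeInt k y ∧ x - y = a := by
  rcases le_or_gt 0 a with ha | ha
  · obtain ⟨n, hn0, hsq1, hsq2⟩ := kfree_aux_main a.toNat
    refine ⟨((n + a.toNat : ℕ) : ℤ), (n : ℤ),
      kfree_of_squarefree k hk _ (by omega) hsq2,
      kfree_of_squarefree k hk _ (by omega) hsq1, ?_⟩
    push_cast
    rw [Int.toNat_of_nonneg ha]
    ring
  · obtain ⟨n, hn0, hsq1, hsq2⟩ := kfree_aux_main (-a).toNat
    refine ⟨(n : ℤ), ((n + (-a).toNat : ℕ) : ℤ),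
      kfree_of_squarefree k hk _ (by omega) hsq1,
      kfree_of_squarefree k hk _ (by omega) hsq2, ?_⟩
    push_cast
    rw [Int.toNat_of_nonneg (by omega : (0:ℤ) ≤ -a)]
    ring
end

section
/- Let k ≥ 2. The set of k-free positive integers up to x has cardinality x/ζ(k) + O(x^{1/k}), where ζ is the Riemann zeta function. -/
/-- A positive integer `n` is `k`-free if `p^k ∤ n` for every prime `p`. -/
def KFreeNat (k n : ℕ) : Prop := ∀ p : ℕ, p.Prime → ¬ (p^k ∣ n)

/-!
The `d` with `d ^ k ∣ n` are exactly the divisors of `∏ p ^ ⌊v_p(n) / k⌋`, so Möbius inversion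
gives `[n is k-free] = ∑_{d ^ k ∣ n} μ(d)`. Summing over `n ≤ x` yields
`∑_{d ≤ D} μ(d) ⌊x / d ^ k⌋` with `D = ⌊x ^ (1/k)⌋`. Replacing each floor by `x / d ^ k` costs at
most `D + 1`, and completing `∑_{d ≤ D} μ(d) / d ^ k` to `∑ μ(d) / d ^ k = 1 / ζ(k)` costs
`x ∑_{d > D} d ^ (-k) ≤ 2 x / (D + 1) ^ (k - 1) ≤ 2 x ^ (1/k)`.
-/

open Finset ArithmeticFunction
open scoped ArithmeticFunction.Moebius ArithmeticFunction.zeta LSeries.notation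

namespace Nat

noncomputable def maxPowDvdRoot (k n : ℕ) : ℕ :=
  (n.factorization.mapRange (· / k) (Nat.zero_div k)).prod (· ^ ·)

lemma prime_of_mem_support_mapRange_factorization {k n p : ℕ}
    (hp : p ∈ (n.factorization.mapRange (· / k) (Nat.zero_div k)).support) : p.Prime :=
  prime_of_mem_primeFactors (Finsupp.support_mapRange hp)

lemma factorization_maxPowDvdRoot (k n : ℕ) :
    (maxPowDvdRoot k n).factorization = n.factorization.mapRange (· / k) (Nat.zero_div k) :=
  prod_pow_factorization_eq_self fun _ => prime_of_mem_support_mapRange_factorization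

lemma maxPowDvdRoot_ne_zero (k n : ℕ) : maxPowDvdRoot k n ≠ 0 :=
  Finsupp.prod_ne_zero_iff.mpr fun _ hp =>
    pow_ne_zero _ (prime_of_mem_support_mapRange_factorization hp).ne_zero

lemma dvd_maxPowDvdRoot_iff {k n d : ℕ} (hk : k ≠ 0) (hn : n ≠ 0) :
    d ∣ maxPowDvdRoot k n ↔ d ^ k ∣ n := by
  rcases eq_or_ne d 0 with rfl | hd
  · simp [zero_pow hk, maxPowDvdRoot_ne_zero, hn]
  rw [← factorization_le_iff_dvd hd (maxPowDvdRoot_ne_zero k n),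
    ← factorization_le_iff_dvd (pow_ne_zero k hd) hn, factorization_maxPowDvdRoot,
    factorization_pow, Finsupp.le_def, Finsupp.le_def]
  simp [Nat.le_div_iff_mul_le (Nat.pos_of_ne_zero hk), mul_comm]

lemma kFreeNat_iff_maxPowDvdRoot_eq_one {k n : ℕ} (hk : k ≠ 0) (hn : n ≠ 0) :
    KFreeNat k n ↔ maxPowDvdRoot k n = 1 := by
  simp only [eq_one_iff_not_exists_prime_dvd, dvd_maxPowDvdRoot_iff hk hn, KFreeNat]

open scoped Classical in
lemma sum_moebius_filter_pow_dvd {k n : ℕ} (hk : k ≠ 0) (hn : n ≠ 0) :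
    ∑ d ∈ n.divisors with d ^ k ∣ n, μ d = if KFreeNat k n then 1 else 0 := by
  have hdiv : {d ∈ n.divisors | d ^ k ∣ n} = (maxPowDvdRoot k n).divisors := by
    ext d
    simp only [mem_filter, mem_divisors, dvd_maxPowDvdRoot_iff hk hn]
    exact ⟨fun h => ⟨h.2, maxPowDvdRoot_ne_zero k n⟩,
      fun h => ⟨⟨(dvd_pow_self d hk).trans h.1, hn⟩, h.1⟩⟩
  rw [hdiv, ← coe_mul_zeta_apply, moebius_mul_coe_zeta, one_apply,
    kFreeNat_iff_maxPowDvdRoot_eq_one hk hn]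
  congr

end Nat

open scoped Classical in
lemma card_filter_kFreeNat_eq_sum_moebius {k : ℕ} (hk : k ≠ 0) (x : ℕ) :
    (#{n ∈ Icc 1 x | KFreeNat k n} : ℤ) = ∑ d ∈ range (x + 1), μ d * (x / d ^ k : ℕ) := by
  have hswap : ∀ n d, n ∈ Icc 1 x ∧ d ∈ {d ∈ n.divisors | d ^ k ∣ n} ↔
      n ∈ {n ∈ Icc 1 x | d ^ k ∣ n} ∧ d ∈ range (x + 1) := by
    intro n d
    simp only [mem_Icc, mem_filter, Nat.mem_divisors, mem_range]
    constructor
    · rintro ⟨hnx, ⟨hdn, -⟩, hdkn⟩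
      exact ⟨⟨hnx, hdkn⟩, by have := Nat.le_of_dvd (by omega) hdn; omega⟩
    · rintro ⟨⟨hnx, hdkn⟩, -⟩
      exact ⟨hnx, ⟨(dvd_pow_self d hk).trans hdkn, by omega⟩, hdkn⟩
  calc (#{n ∈ Icc 1 x | KFreeNat k n} : ℤ)
      = ∑ n ∈ Icc 1 x, ∑ d ∈ n.divisors with d ^ k ∣ n, μ d := by
        rw [natCast_card_filter]
        refine sum_congr rfl fun n hn => ?_
        rw [Nat.sum_moebius_filter_pow_dvd hk (by simp at hn; omega)]
    _ = ∑ d ∈ range (x + 1), ∑ n ∈ Icc 1 x with d ^ k ∣ n, μ d := sum_comm' hswap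
    _ = ∑ d ∈ range (x + 1), μ d * (x / d ^ k : ℕ) := by
        refine sum_congr rfl fun d _ => ?_
        rw [sum_const, ← Nat.Ioc_filter_dvd_card_eq_div, nsmul_eq_mul, mul_comm,
          ← Icc_add_one_left_eq_Ioc, zero_add]

lemma sum_range_mul_div_pow_eq_of_lt {R : Type*} [Semiring R] (a : ℕ → R) {k x D : ℕ}
    (hDx : D ≤ x) (hxD : x < (D + 1) ^ k) :
    ∑ d ∈ range (x + 1), a d * (x / d ^ k : ℕ) = ∑ d ∈ range (D + 1), a d * (x / d ^ k : ℕ) :=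
  eventually_constant_sum (fun d hd => by
    rw [Nat.div_eq_of_lt (hxD.trans_le (Nat.pow_le_pow_left hd k)), Nat.cast_zero, mul_zero])
    (by omega)

lemma abs_natCast_div_sub_div_le_one (x m : ℕ) : |((x / m : ℕ) : ℝ) - x / m| ≤ 1 := by
  rw [← Nat.floor_div_eq_div (K := ℝ), abs_sub_le_iff]
  have hq : (0 : ℝ) ≤ x / m := by positivity
  constructor <;> linarith [Nat.floor_le hq, Nat.lt_floor_add_one ((x : ℝ) / m)]

lemma sum_range_one_div_add_pow_le {k : ℕ} (hk : 2 ≤ k) (D n : ℕ) :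
    ∑ i ∈ range n, 1 / ((i : ℝ) + D + 1) ^ k ≤ 2 / ((D : ℝ) + 1) ^ (k - 1) := by
  have hD : (0 : ℝ) < D + 1 := by positivity
  have hterm : ∀ d : ℕ, D + 1 ≤ d →
      1 / (d : ℝ) ^ k ≤ 1 / ((D : ℝ) + 1) ^ (k - 2) * ((d : ℝ) ^ 2)⁻¹ := by
    intro d hd
    have hd' : (D : ℝ) + 1 ≤ d := by exact_mod_cast hd
    calc 1 / (d : ℝ) ^ k = 1 / ((d : ℝ) ^ (k - 2) * (d : ℝ) ^ 2) := by
          rw [← pow_add, Nat.sub_add_cancel hk]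
      _ ≤ 1 / (((D : ℝ) + 1) ^ (k - 2) * (d : ℝ) ^ 2) := by
          gcongr
          exact mul_pos (by positivity) (pow_pos (hD.trans_le hd') 2)
      _ = 1 / ((D : ℝ) + 1) ^ (k - 2) * ((d : ℝ) ^ 2)⁻¹ := by ring
  calc ∑ i ∈ range n, 1 / ((i : ℝ) + D + 1) ^ k
      = ∑ d ∈ Ioo D (n + (D + 1)), 1 / (d : ℝ) ^ k := by
        rw [range_eq_Ico, ← Ico_add_one_left_eq_Ioo]
        convert sum_Ico_add' (fun d : ℕ => 1 / (d : ℝ) ^ k) 0 n (D + 1) using 3 with i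
        · push_cast; ring
        · rw [zero_add]
    _ ≤ ∑ d ∈ Ioo D (n + (D + 1)), 1 / ((D : ℝ) + 1) ^ (k - 2) * ((d : ℝ) ^ 2)⁻¹ :=
        sum_le_sum fun d hd => hterm d (mem_Ioo.mp hd).1
    _ ≤ 1 / ((D : ℝ) + 1) ^ (k - 2) * (2 / (D + 1)) := by
        rw [← mul_sum]; gcongr; exact sum_Ioo_inv_sq_le D _
    _ = 2 / ((D : ℝ) + 1) ^ (k - 1) := by
        rw [show k - 1 = k - 2 + 1 by omega, pow_succ]; field_simp

lemma abs_tsum_div_add_pow_le {k : ℕ} (hk : 2 ≤ k) {a : ℕ → ℝ} (ha : ∀ d, |a d| ≤ 1) (D : ℕ) :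
    |∑' i, a (i + (D + 1)) / ((i + (D + 1) : ℕ) : ℝ) ^ k| ≤ 2 / ((D : ℝ) + 1) ^ (k - 1) := by
  have hg0 : ∀ i : ℕ, 0 ≤ 1 / ((i : ℝ) + D + 1) ^ k := fun i => by positivity
  have hg := summable_of_sum_range_le hg0 (sum_range_one_div_add_pow_le hk D)
  rw [← Real.norm_eq_abs]
  calc _ ≤ ∑' i : ℕ, 1 / ((i : ℝ) + D + 1) ^ k := tsum_of_norm_bounded hg.hasSum fun i => ?_
    _ ≤ _ := Real.tsum_le_of_sum_range_le hg0 (sum_range_one_div_add_pow_le hk D)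
  rw [Real.norm_eq_abs, abs_div, abs_pow, Nat.abs_cast, ← add_assoc]
  push_cast
  exact div_le_div_of_nonneg_right (ha _) (by positivity)

lemma abs_sum_mul_div_pow_sub_le {k : ℕ} (hk : 2 ≤ k) {a : ℕ → ℝ} (ha : ∀ d, |a d| ≤ 1)
    (x D : ℕ) :
    |∑ d ∈ range (D + 1), a d * (x / d ^ k : ℕ) - x * ∑' d : ℕ, a d / (d : ℝ) ^ k|
      ≤ D + 1 + 2 * (x / ((D : ℝ) + 1) ^ (k - 1)) := by
  have hsum : Summable fun d : ℕ => a d / (d : ℝ) ^ k :=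
    .of_norm_bounded (Real.summable_one_div_nat_pow.mpr hk) fun d => by
      rw [Real.norm_eq_abs, abs_div, abs_pow, Nat.abs_cast]
      exact div_le_div_of_nonneg_right (ha d) (by positivity)
  have hfloor : ∀ d, |a d * (x / d ^ k : ℕ) - x * (a d / (d : ℝ) ^ k)| ≤ 1 := fun d => by
    have h := abs_natCast_div_sub_div_le_one x (d ^ k)
    push_cast at h
    rw [show a d * _ - _ = a d * (((x / d ^ k : ℕ) : ℝ) - x / (d : ℝ) ^ k) by ring, abs_mul]
    exact mul_le_one₀ (ha d) (abs_nonneg _) h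
  have htail := abs_tsum_div_add_pow_le hk ha D
  rw [← hsum.sum_add_tsum_nat_add (D + 1), mul_add, mul_sum, ← sub_sub, ← sum_sub_distrib]
  calc _ ≤ |∑ d ∈ range (D + 1), (a d * (x / d ^ k : ℕ) - x * (a d / (d : ℝ) ^ k))|
          + |x * ∑' i, a (i + (D + 1)) / ((i + (D + 1) : ℕ) : ℝ) ^ k| := abs_sub _ _
    _ ≤ D + 1 + 2 * (x / ((D : ℝ) + 1) ^ (k - 1)) := by
        gcongr
        · refine (abs_sum_le_sum_abs _ _).trans ?_
          simpa using sum_le_sum fun d (_ : d ∈ range (D + 1)) => hfloor d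
        · rw [abs_mul, Nat.abs_cast, mul_div_assoc', mul_comm 2 (x : ℝ), mul_div_assoc]
          gcongr

lemma tsum_one_div_add_one_pow_mul_tsum_moebius_div_pow {k : ℕ} (hk : 1 < k) :
    (∑' m : ℕ, (1 : ℝ) / (m + 1) ^ k) * ∑' d : ℕ, (μ d : ℝ) / (d : ℝ) ^ k = 1 := by
  have hs : 1 < (k : ℂ).re := by simpa using hk
  have hζ : ((∑' m : ℕ, (1 : ℝ) / (m + 1) ^ k : ℝ) : ℂ) = riemannZeta k := by
    rw [zeta_eq_tsum_one_div_nat_add_one_cpow hs, Complex.ofReal_tsum]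
    push_cast
    simp [Complex.cpow_natCast]
  have hμ : ((∑' d : ℕ, (μ d : ℝ) / (d : ℝ) ^ k : ℝ) : ℂ) = L ↗μ k := by
    rw [Complex.ofReal_tsum, LSeries]
    refine tsum_congr fun d => ?_
    rcases eq_or_ne d 0 with rfl | hd
    · simp [LSeries.term_zero]
    · rw [LSeries.term_of_ne_zero hd, Complex.cpow_natCast]
      push_cast
      rfl
  have h := LSeries_zeta_mul_Lseries_moebius hs
  rw [LSeries_zeta_eq_riemannZeta hs, ← hζ, ← hμ] at h
  exact_mod_cast h

lemma natCard_kFreeNat_eq_sum_moebius {k x D : ℕ} (hk : k ≠ 0) (hDx : D ≤ x)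
    (hxD : x < (D + 1) ^ k) :
    (Nat.card {n : ℕ // n ∈ Icc 1 x ∧ KFreeNat k n} : ℝ)
      = ∑ d ∈ range (D + 1), (μ d : ℝ) * (x / d ^ k : ℕ) := by
  classical
  rw [Nat.card_congr (Equiv.subtypeEquivRight fun _ => mem_filter.symm), Nat.card_eq_finsetCard]
  have h := congrArg (Int.cast : ℤ → ℝ) ((card_filter_kFreeNat_eq_sum_moebius hk x).trans
    (sum_range_mul_div_pow_eq_of_lt _ hDx hxD))
  simp only [Int.cast_natCast, Int.cast_sum, Int.cast_mul] at h
  exact h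

lemma pow_div_pow_sub_one_le {k : ℕ} (hk : k ≠ 0) {y c : ℝ} (hy : 0 ≤ y) (hyc : y ≤ c) :
    y ^ k / c ^ (k - 1) ≤ y := by
  rcases hy.eq_or_lt with rfl | hy
  · simp [zero_pow hk]
  rw [div_le_iff₀ (pow_pos (hy.trans_le hyc) _)]
  calc y ^ k = y * y ^ (k - 1) := by rw [← pow_succ', Nat.sub_add_cancel (by omega)]
    _ ≤ y * c ^ (k - 1) := by gcongr

/-- For `k ≥ 2`, the number of `k`-free integers in `[1, x]` is
`x / ζ(k) + O(x^{1/k})`, where `ζ(k) = ∑_{m ≥ 1} m⁻ᵏ`. -/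
theorem kfree_count_asymptotic (k : ℕ) (hk : 2 ≤ k) :
    ∃ C : ℝ, ∀ x : ℕ, 1 ≤ x →
      |(Nat.card {n : ℕ // n ∈ Finset.Icc 1 x ∧ KFreeNat k n} : ℝ) -
        (x : ℝ) / (∑' m : ℕ, (1 : ℝ) / (m + 1)^k)| ≤ C * (x : ℝ)^((1 : ℝ) / k) := by
  refine ⟨4, fun x hx => ?_⟩
  have hyk : ((x : ℝ) ^ ((1 : ℝ) / k)) ^ k = x := by
    rw [one_div]; exact Real.rpow_inv_natCast_pow (by positivity) (by omega)
  have hy : 1 ≤ (x : ℝ) ^ ((1 : ℝ) / k) := Real.one_le_rpow (by exact_mod_cast hx) (by positivity)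
  set y : ℝ := (x : ℝ) ^ ((1 : ℝ) / k)
  set D := ⌊y⌋₊
  have hDy : (D : ℝ) ≤ y := Nat.floor_le (by positivity)
  have hyD : y < D + 1 := Nat.lt_floor_add_one y
  have hxD : x < (D + 1) ^ k := by
    exact_mod_cast hyk ▸ pow_lt_pow_left₀ hyD (by positivity) (by omega)
  have hDx : D ≤ x := by exact_mod_cast hDy.trans (hyk ▸ le_self_pow₀ hy (by omega))
  have hζ : (x : ℝ) / ∑' m : ℕ, (1 : ℝ) / (m + 1) ^ k = x * ∑' d : ℕ, (μ d : ℝ) / (d : ℝ) ^ k := by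
    rw [div_eq_mul_inv, ← eq_inv_of_mul_eq_one_right
      (tsum_one_div_add_one_pow_mul_tsum_moebius_div_pow (by omega))]
  have htail : (x : ℝ) / ((D : ℝ) + 1) ^ (k - 1) ≤ y :=
    hyk ▸ pow_div_pow_sub_one_le (by omega) (by positivity) hyD.le
  rw [natCard_kFreeNat_eq_sum_moebius (by omega) hDx hxD, hζ]
  calc _ ≤ D + 1 + 2 * (x / ((D : ℝ) + 1) ^ (k - 1)) :=
        abs_sum_mul_div_pow_sub_le hk (fun d => by exact_mod_cast abs_moebius_le_one) x D
    _ ≤ 4 * y := by linarith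
end

section
/- Let k ≥ 2 and let P be a finite nonempty set of integers. There exists an integer t such that p + t is k-free for every p ∈ P if and only if for every prime p the residues of P modulo p^k do not cover all of ℤ/p^kℤ. -/
/-!
Necessity: if `P + t` is `k`-free, then `-t` is a residue modulo `p ^ k` that `P` misses.

Sufficiency is a sieve. For each prime `q` pick a shift `s q` with `q ^ k ∤ p + s q` on `P`.
By the Chinese remainder theorem some `a` agrees with every `s q`, `q ≤ B`, modulo `q ^ k`,
so every `t = a + M m` with `M = (B#) ^ k` is harmless at the primes `q ≤ B`. A prime `q > B`
with `q ^ k ∣ p + t` for some `m < N` satisfies `q ≤ √X`, `X ≈ M N`, and, being coprime to `M`,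
it does so for at most `N / q ^ 2 + 1` values of `m` per `p`. Hence at most
`|P| (N / B + √X) < N` values of `m` are bad once `B ≥ 4 |P|` and `N` is large.
-/

def KFree (k : ℕ) (n : ℤ) : Prop := ∀ q : ℕ, q.Prime → ¬ ((q : ℤ)^k ∣ n)

open Finset

lemma exists_forall_not_dvd_add_iff {d : ℕ} {P : Finset ℤ} :
    (∃ s : ℤ, ∀ p ∈ P, ¬ (d : ℤ) ∣ p + s) ↔ ¬ ∀ r : ZMod d, ∃ q ∈ P, (q : ZMod d) = r := by
  simp only [← ZMod.intCast_zmod_eq_zero_iff_dvd, Int.cast_add]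
  constructor
  · rintro ⟨s, hs⟩ hcover
    obtain ⟨q, hq, hqs⟩ := hcover (-s)
    exact hs q hq (by rw [hqs, neg_add_cancel])
  · intro h
    push Not at h
    obtain ⟨r, hr⟩ := h
    obtain ⟨s, rfl⟩ := ZMod.intCast_surjective r
    refine ⟨-s, fun p hp hps => hr p hp ?_⟩
    rwa [Int.cast_neg, add_neg_eq_zero] at hps

lemma exists_int_forall_prime_pow_dvd_sub (k : ℕ) {S : Finset ℕ} (hS : ∀ q ∈ S, q.Prime)
    (f : ℕ → ℤ) : ∃ a : ℤ, ∀ q ∈ S, (q : ℤ) ^ k ∣ a - f q := by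
  obtain ⟨a, ha⟩ := IsDedekindDomain.exists_forall_sub_mem_ideal (s := S)
    (fun q : ℕ => Ideal.span {(q : ℤ)}) (fun _ => k)
    (fun q hq => Ideal.prime_span_singleton_iff.mpr (Nat.prime_iff_prime_int.mp (hS q hq)))
    (fun q _ q' _ hne h => hne <| by
      rw [Ideal.span_singleton_eq_span_singleton, Int.associated_iff_natAbs] at h
      simpa using h)
    (fun q => f q)
  exact ⟨a, fun q hq => by
    simpa [Ideal.span_singleton_pow, Ideal.mem_span_singleton] using ha q hq⟩

lemma exists_forall_prime_le_not_dvd {k : ℕ} {P : Finset ℤ} {s : ℕ → ℤ}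
    (hs : ∀ q : ℕ, q.Prime → ∀ p ∈ P, ¬ (q : ℤ) ^ k ∣ p + s q) (B : ℕ) :
    ∃ a : ℤ, ∀ q : ℕ, q.Prime → q ≤ B →
      ∀ p ∈ P, ∀ m : ℕ, ¬ (q : ℤ) ^ k ∣ p + (a + ((primorial B ^ k : ℕ) : ℤ) * m) := by
  obtain ⟨a, ha⟩ := exists_int_forall_prime_pow_dvd_sub k
    (fun _ hq => (Nat.mem_primesLE.mp hq).2) s
  refine ⟨a, fun q hq hqB p hp m hdvd => hs q hq p hp ?_⟩
  set M : ℤ := ((primorial B ^ k : ℕ) : ℤ)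
  have hM : (q : ℤ) ^ k ∣ M :=
    Int.natCast_dvd_natCast.mpr (pow_dvd_pow_of_dvd (hq.dvd_primorial_iff.mpr hqB) k)
  have key : p + s q = p + (a + M * m) - (a - s q) - M * m := by ring
  rw [key]
  exact (hdvd.sub (ha q (Nat.mem_primesLE.mpr ⟨hqB, hq⟩))).sub (hM.mul_right _)

lemma Nat.Prime.coprime_primorial_pow {q B : ℕ} (hq : q.Prime) (hB : B < q) (k : ℕ) :
    q.Coprime (primorial B ^ k) :=
  ((hq.coprime_iff_not_dvd).mpr fun h => (hq.dvd_primorial_iff.mp h).not_gt hB).pow_right k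

lemma card_filter_dvd_add_mul_le {d M : ℕ} (h : d.Coprime M) (c : ℤ) (N : ℕ) :
    #((range N).filter fun m : ℕ => (d : ℤ) ∣ c + M * m) ≤ N / d + 1 := by
  have hmaps : ∀ m ∈ (range N).filter fun m : ℕ => (d : ℤ) ∣ c + M * m,
      m / d ∈ range (N / d + 1) := by
    intro m hm
    simp only [mem_filter, mem_range] at hm ⊢
    exact Nat.lt_succ_of_le (Nat.div_le_div_right hm.1.le)
  have hinj : Set.InjOn (· / d) ((range N).filter fun m : ℕ => (d : ℤ) ∣ c + M * m) := by
    intro m hm m' hm' hdiv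
    simp only [coe_filter, Set.mem_ofPred_eq] at hm hm'
    refine Nat.ext_div_modEq hdiv (Nat.modEq_iff_dvd.mpr ?_)
    refine h.isCoprime.dvd_of_dvd_mul_left ?_
    convert hm'.2.sub hm.2 using 1
    ring
  simpa using card_le_card_of_injOn _ hmaps hinj

lemma sum_inv_sq_le_inv {B : ℕ} (hB : B ≠ 0) {s : Finset ℕ} (hs : ∀ q ∈ s, B < q) :
    ∑ q ∈ s, ((q : ℝ) ^ 2)⁻¹ ≤ (B : ℝ)⁻¹ := by
  set R := max B (s.sup id)
  have hsub : s ⊆ Ioc B R := fun q hq =>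
    mem_Ioc.mpr ⟨hs q hq, le_max_of_le_right (le_sup (f := id) hq)⟩
  calc ∑ q ∈ s, ((q : ℝ) ^ 2)⁻¹ ≤ ∑ q ∈ Ioc B R, ((q : ℝ) ^ 2)⁻¹ :=
        sum_le_sum_of_subset_of_nonneg hsub fun _ _ _ => by positivity
    _ ≤ (B : ℝ)⁻¹ - (R : ℝ)⁻¹ := sum_Ioc_inv_sq_le_sub hB (le_max_left _ _)
    _ ≤ (B : ℝ)⁻¹ := sub_le_self _ (by positivity)

lemma mul_sum_div_sq_add_one_lt {n B N R : ℕ} (hB : 4 * n ≤ B) (hB0 : B ≠ 0)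
    (hR : 2 * n * R < N) {Q : Finset ℕ} (hQ : Q ⊆ Ioc B R) :
    n * ∑ q ∈ Q, (N / q ^ 2 + 1) < N := by
  have hsum : (∑ q ∈ Q, (N / q ^ 2 + 1) : ℕ) ≤ (N : ℝ) / B + R := by
    have hcard : (#Q : ℝ) ≤ R := by
      exact_mod_cast (card_le_card hQ).trans ((Nat.card_Ioc B R).le.trans (Nat.sub_le R B))
    have htail := sum_inv_sq_le_inv hB0 fun q hq => (mem_Ioc.mp (hQ hq)).1
    push_cast
    rw [sum_add_distrib, sum_const, nsmul_one]
    calc ∑ q ∈ Q, ((N / q ^ 2 : ℕ) : ℝ) + #Q ≤ ∑ q ∈ Q, (N : ℝ) * ((q : ℝ) ^ 2)⁻¹ + #Q := by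
          gcongr with q
          exact_mod_cast Nat.cast_div_le
      _ ≤ (N : ℝ) / B + R := by
          rw [← mul_sum, div_eq_mul_inv]
          gcongr
  have hnB : (n : ℝ) * ((N : ℝ) / B) ≤ N / 4 := by
    rw [mul_div_assoc', div_le_div_iff₀ (by positivity) (by norm_num)]
    have : (4 * n : ℝ) ≤ B := by exact_mod_cast hB
    nlinarith [(Nat.cast_nonneg N : (0 : ℝ) ≤ N)]
  have hnR : (2 * n * R : ℝ) < N := by exact_mod_cast hR
  have : (n : ℝ) * ((∑ q ∈ Q, (N / q ^ 2 + 1) : ℕ) : ℝ) < N := by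
    nlinarith [mul_le_mul_of_nonneg_left hsum (Nat.cast_nonneg n)]
  exact_mod_cast this

lemma exists_two_mul_mul_sqrt_lt (n C M : ℕ) : ∃ N, 2 * n * Nat.sqrt (C + M * N) < N := by
  refine ⟨4 * n ^ 2 * (C + M) + 1, ?_⟩
  set N := 4 * n ^ 2 * (C + M) + 1 with hN
  have hX : C + M * N ≤ (C + M) * N := by
    rw [add_mul, mul_comm M]; exact Nat.add_le_add_right (Nat.le_mul_of_pos_right C (by omega)) _
  refine lt_of_pow_lt_pow_left₀ 2 (Nat.zero_le N) ?_
  calc (2 * n * Nat.sqrt (C + M * N)) ^ 2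
        = 4 * n ^ 2 * (Nat.sqrt (C + M * N) * Nat.sqrt (C + M * N)) := by ring
    _ ≤ 4 * n ^ 2 * ((C + M) * N) := Nat.mul_le_mul_left _ ((Nat.sqrt_le _).trans hX)
    _ < N ^ 2 := by rw [← mul_assoc, sq N]; exact Nat.mul_lt_mul_of_pos_right (by omega) (by omega)

lemma le_sqrt_of_pow_dvd {k q X : ℕ} {v : ℤ} (hk : 2 ≤ k) (hq : q ≠ 0) (hv : v ≠ 0)
    (hvX : v.natAbs ≤ X) (h : (q : ℤ) ^ k ∣ v) : q ≤ Nat.sqrt X := by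
  rw [Nat.le_sqrt]
  have : q ^ k ∣ v.natAbs := Int.natCast_dvd.mp (by exact_mod_cast h)
  calc q * q = q ^ 2 := (sq q).symm
    _ ≤ q ^ k := Nat.pow_le_pow_right (Nat.pos_of_ne_zero hq) hk
    _ ≤ v.natAbs := Nat.le_of_dvd (Int.natAbs_pos.mpr hv) this
    _ ≤ X := hvX

section Sieve

variable {k B M : ℕ} {P : Finset ℤ} {a : ℤ}

open Classical in
lemma card_filter_not_kfree_le (hk : 2 ≤ k) (hB : 2 ≤ B)
    (hsmall : ∀ q : ℕ, q.Prime → q ≤ B → ∀ p ∈ P, ∀ m : ℕ, ¬ (q : ℤ) ^ k ∣ p + (a + M * m))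
    (hlarge : ∀ q : ℕ, q.Prime → B < q → q.Coprime M) (N : ℕ) :
    #((range N).filter fun m : ℕ => ¬ ∀ p ∈ P, KFree k (p + (a + M * m))) ≤
      #P * ∑ q ∈ Ioc B (Nat.sqrt (P.sup Int.natAbs + a.natAbs + M * N)) with q.Prime,
        (N / q ^ 2 + 1) := by
  set Q := {q ∈ Ioc B (Nat.sqrt (P.sup Int.natAbs + a.natAbs + M * N)) | q.Prime}
  set hit := fun pq : ℤ × ℕ => (range N).filter fun m : ℕ => ((pq.2 ^ 2 : ℕ) : ℤ) ∣ pq.1 + a + M * m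
  calc #((range N).filter fun m : ℕ => ¬ ∀ p ∈ P, KFree k (p + (a + M * m)))
      ≤ #((P ×ˢ Q).biUnion hit) := card_le_card ?_
    _ ≤ ∑ pq ∈ P ×ˢ Q, #(hit pq) := card_biUnion_le
    _ ≤ ∑ pq ∈ P ×ˢ Q, (N / pq.2 ^ 2 + 1) := sum_le_sum fun pq hpq => by
        obtain ⟨hqI, hq⟩ := mem_filter.mp (mem_product.mp hpq).2
        exact card_filter_dvd_add_mul_le ((hlarge _ hq (mem_Ioc.mp hqI).1).pow_left 2) _ N
    _ = #P * ∑ q ∈ Q, (N / q ^ 2 + 1) := by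
        rw [sum_product]; dsimp only; rw [sum_const, smul_eq_mul]
  intro m hm
  simp only [mem_filter, mem_range, KFree, not_forall, not_not] at hm
  obtain ⟨hmN, p, hp, q, hq, hdvd⟩ := hm
  have hBq : B < q := lt_of_not_ge fun hqB => hsmall q hq hqB p hp m hdvd
  have hv : p + (a + M * m) ≠ 0 := fun h0 =>
    hsmall 2 Nat.prime_two hB p hp m (h0 ▸ dvd_zero _)
  have hvX : (p + (a + M * m)).natAbs ≤ P.sup Int.natAbs + a.natAbs + M * N := by
    have hpC : p.natAbs ≤ P.sup Int.natAbs := le_sup hp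
    have hmN' : M * m ≤ M * N := Nat.mul_le_mul_left M hmN.le
    calc (p + (a + M * m)).natAbs ≤ p.natAbs + (a.natAbs + (M * m : ℤ).natAbs) :=
          (Int.natAbs_add_le _ _).trans (Nat.add_le_add_left (Int.natAbs_add_le _ _) _)
      _ ≤ P.sup Int.natAbs + a.natAbs + M * N := by
          rw [Int.natAbs_mul, Int.natAbs_natCast, Int.natAbs_natCast]
          omega
  have hqR := le_sqrt_of_pow_dvd hk hq.ne_zero hv hvX hdvd
  simp only [mem_biUnion, mem_product, mem_filter, mem_Ioc, mem_range, Q, hit]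
  refine ⟨(p, q), ⟨hp, ⟨hBq, hqR⟩, hq⟩, hmN, ?_⟩
  push_cast
  rw [add_assoc]
  exact (pow_dvd_pow _ hk).trans hdvd

theorem exists_kfree_translate_of_forall_small_prime (hk : 2 ≤ k) (hB : 4 * #P + 2 ≤ B)
    (hsmall : ∀ q : ℕ, q.Prime → q ≤ B → ∀ p ∈ P, ∀ m : ℕ, ¬ (q : ℤ) ^ k ∣ p + (a + M * m))
    (hlarge : ∀ q : ℕ, q.Prime → B < q → q.Coprime M) :
    ∃ t : ℤ, ∀ p ∈ P, KFree k (p + t) := by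
  obtain ⟨N, hN⟩ := exists_two_mul_mul_sqrt_lt #P (P.sup Int.natAbs + a.natAbs) M
  have hbad := (card_filter_not_kfree_le hk (by omega) hsmall hlarge N).trans_lt
    (mul_sum_div_sq_add_one_lt (by omega) (by omega) hN (filter_subset _ _))
  obtain ⟨m, hm, hgood⟩ := exists_mem_notMem_of_card_lt_card
    (hbad.trans_eq (card_range N).symm)
  exact ⟨a + M * m, by simpa [mem_range.mp hm] using hgood⟩

end Sieve

theorem exists_translate_kfree_iff_general (k : ℕ) (hk : 2 ≤ k)
    (P : Finset ℤ) :
    (∃ t : ℤ, ∀ p ∈ P, KFree k (p + t)) ↔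
      (∀ p : ℕ, p.Prime →
        ¬ (∀ r : ZMod (p^k), ∃ q ∈ P, (q : ZMod (p^k)) = r)) := by
  constructor
  · rintro ⟨t, ht⟩ q hq
    exact exists_forall_not_dvd_add_iff.mp ⟨t, fun p hp => by simpa using ht p hp q hq⟩
  · intro H
    -- quantified over all `q`, so that `choose` yields a plain function `ℕ → ℤ`
    have hshift : ∀ q : ℕ, ∃ s : ℤ, q.Prime → ∀ p ∈ P, ¬ (q : ℤ) ^ k ∣ p + s := fun q => by
      by_cases hq : q.Prime
      · obtain ⟨s, hs⟩ := exists_forall_not_dvd_add_iff.mpr (H q hq)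
        exact ⟨s, fun _ => by simpa using hs⟩
      · exact ⟨0, fun h => (hq h).elim⟩
    choose s hs using hshift
    obtain ⟨a, ha⟩ := exists_forall_prime_le_not_dvd hs (4 * #P + 2)
    exact exists_kfree_translate_of_forall_small_prime hk le_rfl ha
      fun q hq hBq => hq.coprime_primorial_pow hBq k

/-- For `k ≥ 2` and a finite nonempty set `P` of integers, there is a translate
`t` making every element of `P + t` `k`-free iff for every prime `p` the
residues of `P` modulo `p^k` do not cover all of `ℤ/p^kℤ`. -/
theorem exists_translate_kfree_iff (k : ℕ) (hk : 2 ≤ k)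
    (P : Finset ℤ) (hP : P.Nonempty) :
    (∃ t : ℤ, ∀ p ∈ P, KFree k (p + t)) ↔
      (∀ p : ℕ, p.Prime →
        ¬ (∀ r : ZMod (p^k), ∃ q ∈ P, (q : ZMod (p^k)) = r)) :=
  exists_translate_kfree_iff_general k hk P
end

section
/- Let k ≥ 2 and let P, Q be disjoint finite sets of integers such that for every prime p the residues of P modulo p^k do not cover ℤ/p^kℤ. Then there exist infinitely many integers t such that every element of P + t is k-free and no element of Q + t is k-free. -/
open Finset Nat

lemma exists_injective_prime_gt (α : Type*) [Encodable α] (D : ℕ) :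
    ∃ f : α → ℕ, Function.Injective f ∧ ∀ a, (f a).Prime ∧ D < f a :=
  ⟨fun a => nth Nat.Prime (D + Encodable.encode a),
    (nth_injective infinite_setOfPred_prime).comp
      ((add_right_injective D).comp Encodable.encode_injective),
    fun a => ⟨prime_nth_prime _, by
      have := add_two_le_nth_prime (D + Encodable.encode a)
      dsimp only
      omega⟩⟩

lemma intCast_ne_of_natAbs_sub_lt {m : ℕ} {a b : ℤ} (hab : a ≠ b) (h : (a - b).natAbs < m) :
    (a : ZMod m) ≠ b := by
  rw [Ne, ZMod.intCast_eq_intCast_iff_dvd_sub]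
  intro hdvd
  refine hab (sub_eq_zero.1 (Int.eq_zero_of_dvd_of_natAbs_lt_natAbs hdvd ?_)).symm
  rwa [Int.natAbs_natCast, ← Int.natAbs_neg, neg_sub]

lemma exists_forall_ne_and_forall_eq {m : ℕ} {P Q : Finset ℤ}
    (hP : ¬ ∀ r : ZMod m, ∃ p ∈ P, (p : ZMod m) = r) (hQ : (Q : Set ℤ).Subsingleton)
    (hPQ : ∀ p ∈ P, ∀ q ∈ Q, (p : ZMod m) ≠ q) :
    ∃ y : ZMod m, (∀ p ∈ P, (p : ZMod m) ≠ y) ∧ ∀ q ∈ Q, (q : ZMod m) = y := by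
  rcases Q.eq_empty_or_nonempty with rfl | ⟨q₀, hq₀⟩
  · obtain ⟨r, hr⟩ := not_forall.1 hP
    exact ⟨r, fun p hp hpr => hr ⟨p, hp, hpr⟩, by simp⟩
  · exact ⟨q₀, fun p hp => hPQ p hp q₀ hq₀, fun q hq => by rw [hQ hq hq₀]⟩

lemma exists_natCast_eq_of_pairwise_coprime {ι : Type*} (m : ι → ℕ) (s : Finset ι)
    (hm : ∀ i ∈ s, m i ≠ 0) (hco : (s : Set ι).Pairwise fun i j => Nat.Coprime (m i) (m j))
    (x : ∀ i, ZMod (m i)) : ∃ t : ℕ, ∀ i ∈ s, (t : ZMod (m i)) = x i := by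
  obtain ⟨t, ht⟩ := chineseRemainderOfFinset (fun i => (x i).val) m s hm hco
  refine ⟨t, fun i hi => ?_⟩
  have : NeZero (m i) := ⟨hm i hi⟩
  rw [← ZMod.natCast_zmod_val (x i), ZMod.natCast_eq_natCast_iff]
  exact ht i hi

lemma exists_zmod_pow_forall_ne_and_forall_eq {k ℓ : ℕ} (hk : k ≠ 0) {P Q : Finset ℤ}
    (hPQ : Disjoint P Q) (hP : ¬ ∀ r : ZMod (ℓ ^ k), ∃ p ∈ P, (p : ZMod (ℓ ^ k)) = r)
    {f : ℤ → ℕ} (hf_inj : Set.InjOn f Q) (hf : ∀ p ∈ P, ∀ q ∈ Q, (p - q).natAbs < f q) :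
    ∃ y : ZMod (ℓ ^ k),
      (∀ p ∈ P, (p : ZMod (ℓ ^ k)) ≠ y) ∧ ∀ q ∈ Q, f q = ℓ → (q : ZMod (ℓ ^ k)) = y := by
  classical
  have hQℓ : ((Q.filter (f · = ℓ) : Finset ℤ) : Set ℤ).Subsingleton := fun q hq q' hq' => by
    rw [mem_coe, mem_filter] at hq hq'
    exact hf_inj hq.1 hq'.1 (hq.2.trans hq'.2.symm)
  have hPQℓ : ∀ p ∈ P, ∀ q ∈ Q.filter (f · = ℓ), (p : ZMod (ℓ ^ k)) ≠ q := by
    intro p hp q hq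
    obtain ⟨hqQ, rfl⟩ := mem_filter.1 hq
    exact intCast_ne_of_natAbs_sub_lt (fun h => disjoint_left.1 hPQ hp (h ▸ hqQ))
      ((hf p hp q hqQ).trans_le (Nat.le_self_pow hk _))
  obtain ⟨y, hyP, hyQ⟩ := exists_forall_ne_and_forall_eq hP hQℓ hPQℓ
  exact ⟨y, hyP, fun q hq hfq => hyQ q (mem_filter.2 ⟨hq, hfq⟩)⟩

lemma exists_translate_mod_primorial_pow {k : ℕ} (hk : k ≠ 0) {P Q : Finset ℤ}
    (hPQ : Disjoint P Q)
    (hP : ∀ p : ℕ, p.Prime → ¬ (∀ r : ZMod (p ^ k), ∃ q ∈ P, (q : ZMod (p ^ k)) = r))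
    {f : ℤ → ℕ} (hf_inj : Set.InjOn f Q) (hf : ∀ p ∈ P, ∀ q ∈ Q, (p - q).natAbs < f q) (z : ℕ) :
    ∃ t₀ : ℕ, ∀ s : ℕ, ∀ ℓ ∈ primesLE z,
      (∀ p ∈ P, ¬ (ℓ : ℤ) ^ k ∣ p + t₀ + (primorial z ^ k : ℕ) * s) ∧
      ∀ q ∈ Q, f q = ℓ → (ℓ : ℤ) ^ k ∣ q + t₀ + (primorial z ^ k : ℕ) * s := by
  have hy : ∀ ℓ : ℕ, ∃ y : ZMod (ℓ ^ k), ℓ.Prime →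
      (∀ p ∈ P, (p : ZMod (ℓ ^ k)) ≠ y) ∧ ∀ q ∈ Q, f q = ℓ → (q : ZMod (ℓ ^ k)) = y := by
    intro ℓ
    by_cases hℓ : ℓ.Prime
    · obtain ⟨y, hy⟩ := exists_zmod_pow_forall_ne_and_forall_eq hk hPQ (hP ℓ hℓ) hf_inj hf
      exact ⟨y, fun _ => hy⟩
    · exact ⟨0, fun h => absurd h hℓ⟩
  choose y hy using hy
  obtain ⟨t₀, ht₀⟩ := exists_natCast_eq_of_pairwise_coprime (· ^ k) (primesLE z)
    (fun ℓ hℓ => pow_ne_zero k (prime_of_mem_primesLE hℓ).ne_zero)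
    (fun ℓ hℓ ℓ' hℓ' hne => Nat.Coprime.pow k k
      ((coprime_primes (prime_of_mem_primesLE hℓ) (prime_of_mem_primesLE hℓ')).2 hne))
    (fun ℓ => -y ℓ)
  refine ⟨t₀, fun s ℓ hℓ => ?_⟩
  have hℓp := prime_of_mem_primesLE hℓ
  have hM : ((primorial z ^ k : ℕ) : ZMod (ℓ ^ k)) = 0 := (ZMod.natCast_eq_zero_iff _ _).2
    (pow_dvd_pow_of_dvd (hℓp.dvd_primorial_iff.2 (le_of_mem_primesLE hℓ)) k)
  have hdvd_iff : ∀ x : ℤ,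
      (ℓ : ℤ) ^ k ∣ x + t₀ + (primorial z ^ k : ℕ) * s ↔ (x : ZMod (ℓ ^ k)) = y ℓ := by
    intro x
    rw [← Int.natCast_pow, ← ZMod.intCast_zmod_eq_zero_iff_dvd]
    simp only [Int.cast_add, Int.cast_mul, Int.cast_natCast]
    rw [ht₀ ℓ hℓ, hM, zero_mul, add_zero, ← sub_eq_add_neg, sub_eq_zero]
  simp only [hdvd_iff]
  exact hy ℓ hℓp

lemma coprime_primorial_of_lt {ℓ z : ℕ} (hℓ : ℓ.Prime) (hzℓ : z < ℓ) : (primorial z).Coprime ℓ :=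
  (hℓ.coprime_iff_not_dvd.2 fun h => (hℓ.dvd_primorial_iff.1 h).not_gt hzℓ).symm

lemma card_filter_modEq_Ioc_le {m : ℕ} (hm : 0 < m) (S n v : ℕ) :
    #{s ∈ Ioc S (S + n) | s ≡ v [MOD m]} ≤ n / m + 1 := by
  have hcard : (#{s ∈ Ioc S (S + n) | s ≡ v [MOD m]} : ℤ) =
      max (⌊((S + n : ℕ) - v) / (m : ℚ)⌋ - ⌊(S - v) / (m : ℚ)⌋) 0 :=
    Ioc_filter_modEq_card S (S + n) hm v
  have hfloor : ⌊(n : ℚ) / m⌋ = ((n / m : ℕ) : ℤ) := by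
    rw [Int.floor_div_natCast, Int.floor_natCast, Int.natCast_div]
  have hsplit := Int.le_floor_add_floor (((S : ℚ) - v) / m) ((n : ℚ) / m)
  rw [← add_div, show (S : ℚ) - v + n = ((S + n : ℕ) : ℚ) - v by push_cast; ring, hfloor]
    at hsplit
  have : (#{s ∈ Ioc S (S + n) | s ≡ v [MOD m]} : ℤ) ≤ (n / m : ℕ) + 1 := by
    rw [hcard]
    exact max_le (by linarith) (by positivity)
  exact_mod_cast this

lemma card_filter_dvd_add_mul_le_s5 {m M : ℕ} (hm : 0 < m) (hM : M.Coprime m) (a : ℤ) (S n : ℕ) :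
    #{s ∈ Ioc S (S + n) | (m : ℤ) ∣ a + M * (s : ℕ)} ≤ n / m + 1 := by
  obtain h | ⟨s₀, hs₀⟩ := ({s ∈ Ioc S (S + n) | (m : ℤ) ∣ a + M * (s : ℕ)}).eq_empty_or_nonempty
  · simp [h]
  refine (card_le_card fun s hs => ?_).trans (card_filter_modEq_Ioc_le hm S n s₀)
  rw [mem_filter] at hs hs₀ ⊢
  refine ⟨hs.1, Nat.modEq_iff_dvd.2 ?_⟩
  have hdiff : (m : ℤ) ∣ M * ((s₀ : ℤ) - s) := by
    rw [mul_sub, ← add_sub_add_left_eq_sub _ _ a]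
    exact dvd_sub hs₀.2 hs.2
  exact (Nat.isCoprime_iff_coprime.2 hM.symm).dvd_of_dvd_mul_left hdiff

lemma le_of_pow_dvd_of_le_mul_self {k ℓ W : ℕ} (hk : 2 ≤ k) (hℓ : 0 < ℓ) {x : ℤ}
    (hx : 0 < x) (hdvd : (ℓ : ℤ) ^ k ∣ x) (hxW : x ≤ W * W) : ℓ ≤ W := by
  have hpow : ((ℓ ^ k : ℕ) : ℤ) ≤ W * W := by push_cast; exact (Int.le_of_dvd hx hdvd).trans hxW
  have : ℓ * ℓ ≤ W * W := by
    calc ℓ * ℓ = ℓ ^ 2 := (sq ℓ).symm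
      _ ≤ ℓ ^ k := Nat.pow_le_pow_right hℓ hk
      _ ≤ W * W := by exact_mod_cast hpow
  exact Nat.mul_self_le_mul_self_iff.1 this

lemma sum_Ioc_inv_sq_le_inv {z : ℕ} (hz : z ≠ 0) (W : ℕ) :
    ∑ ℓ ∈ Ioc z W, ((ℓ : ℝ) ^ 2)⁻¹ ≤ (z : ℝ)⁻¹ := by
  rcases le_or_gt z W with hzW | hWz
  · exact (sum_Ioc_inv_sq_le_sub hz hzW).trans (sub_le_self _ (by positivity))
  · rw [Ioc_eq_empty (by omega), sum_empty]
    positivity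

open Classical in
lemma card_filter_exists_prime_pow_dvd_le {k z M W : ℕ} (hk : 2 ≤ k) (hz : 0 < z)
    (hM : ∀ ℓ : ℕ, ℓ.Prime → z < ℓ → M.Coprime ℓ) (a : ℤ) (S n : ℕ)
    (hpos : ∀ s ∈ Ioc S (S + n), 0 < a + M * (s : ℤ))
    (hle : ∀ s ∈ Ioc S (S + n), a + M * (s : ℤ) ≤ W * W) :
    (#{s ∈ Ioc S (S + n) | ∃ ℓ : ℕ, ℓ.Prime ∧ z < ℓ ∧ (ℓ : ℤ) ^ k ∣ a + M * (s : ℕ)} : ℝ) ≤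
      n / z + W := by
  set bad := fun ℓ : ℕ => {s ∈ Ioc S (S + n) | ((ℓ ^ k : ℕ) : ℤ) ∣ a + M * (s : ℕ)}
  have hsub : {s ∈ Ioc S (S + n) | ∃ ℓ : ℕ, ℓ.Prime ∧ z < ℓ ∧ (ℓ : ℤ) ^ k ∣ a + M * (s : ℕ)} ⊆
      {ℓ ∈ Ioc z W | ℓ.Prime}.biUnion bad := by
    intro s hs
    obtain ⟨hs, ℓ, hℓ, hzℓ, hdvd⟩ := mem_filter.1 hs
    have hℓW := le_of_pow_dvd_of_le_mul_self hk hℓ.pos (hpos s hs) hdvd (hle s hs)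
    exact mem_biUnion.2 ⟨ℓ, mem_filter.2 ⟨mem_Ioc.2 ⟨hzℓ, hℓW⟩, hℓ⟩,
      mem_filter.2 ⟨hs, by exact_mod_cast hdvd⟩⟩
  have hbad : ∀ ℓ ∈ {ℓ ∈ Ioc z W | ℓ.Prime}, (#(bad ℓ) : ℝ) ≤ n * ((ℓ : ℝ) ^ 2)⁻¹ + 1 := by
    intro ℓ hℓ
    obtain ⟨hℓ, hℓp⟩ := mem_filter.1 hℓ
    have hℓ0 : (0 : ℝ) < ℓ := by exact_mod_cast hℓp.pos
    have hcount := card_filter_dvd_add_mul_le_s5 (pow_pos hℓp.pos k)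
      ((hM ℓ hℓp (mem_Ioc.1 hℓ).1).pow_right k) a S n
    calc (#(bad ℓ) : ℝ) ≤ ((n / ℓ ^ k : ℕ) : ℝ) + 1 := by exact_mod_cast hcount
      _ ≤ n / ((ℓ ^ k : ℕ) : ℝ) + 1 := by gcongr; exact Nat.cast_div_le
      _ ≤ n * ((ℓ : ℝ) ^ 2)⁻¹ + 1 := by
        rw [div_eq_mul_inv, Nat.cast_pow]
        gcongr
        exact_mod_cast hℓp.one_lt.le
  calc _ ≤ (#({ℓ ∈ Ioc z W | ℓ.Prime}.biUnion bad) : ℝ) := by exact_mod_cast card_le_card hsub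
    _ ≤ ∑ ℓ ∈ {ℓ ∈ Ioc z W | ℓ.Prime}, (#(bad ℓ) : ℝ) := by exact_mod_cast card_biUnion_le
    _ ≤ ∑ ℓ ∈ {ℓ ∈ Ioc z W | ℓ.Prime}, (n * ((ℓ : ℝ) ^ 2)⁻¹ + 1) := sum_le_sum hbad
    _ ≤ ∑ ℓ ∈ Ioc z W, (n * ((ℓ : ℝ) ^ 2)⁻¹ + 1) :=
      sum_le_sum_of_subset_of_nonneg (filter_subset _ _) fun _ _ _ => by positivity
    _ = n * ∑ ℓ ∈ Ioc z W, ((ℓ : ℝ) ^ 2)⁻¹ + (W - z : ℕ) := by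
      rw [sum_add_distrib, ← mul_sum, sum_const, Nat.card_Ioc, nsmul_one]
    _ ≤ n / z + W := by
      rw [div_eq_mul_inv]
      gcongr
      · exact sum_Ioc_inv_sq_le_inv hz.ne' W
      · exact Nat.sub_le W z

lemma exists_mem_Ioc_forall_not_prime_pow_dvd {k z M W : ℕ} (hk : 2 ≤ k) (P : Finset ℤ)
    (hz : 2 * #P < z) (hM : ∀ ℓ : ℕ, ℓ.Prime → z < ℓ → M.Coprime ℓ) (a : ℤ) {S n : ℕ}
    (hn : 0 < n) (hW : 2 * #P * W ≤ n)
    (hpos : ∀ p ∈ P, ∀ s ∈ Ioc S (S + n), 0 < p + a + M * (s : ℤ))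
    (hle : ∀ p ∈ P, ∀ s ∈ Ioc S (S + n), p + a + M * (s : ℤ) ≤ W * W) :
    ∃ s ∈ Ioc S (S + n), ∀ p ∈ P, ∀ ℓ : ℕ, ℓ.Prime → z < ℓ → ¬ (ℓ : ℤ) ^ k ∣ p + a + M * s := by
  classical
  set bad := fun p : ℤ =>
    {s ∈ Ioc S (S + n) | ∃ ℓ : ℕ, ℓ.Prime ∧ z < ℓ ∧ (ℓ : ℤ) ^ k ∣ p + a + M * (s : ℕ)}
  have hbad : (#(P.biUnion bad) : ℝ) ≤ #P * (n / z + W) := by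
    calc (#(P.biUnion bad) : ℝ) ≤ ∑ p ∈ P, (#(bad p) : ℝ) := by exact_mod_cast card_biUnion_le
      _ ≤ ∑ _p ∈ P, ((n : ℝ) / z + W) := sum_le_sum fun p hp =>
          card_filter_exists_prime_pow_dvd_le hk (by omega) hM (p + a) S n (hpos p hp) (hle p hp)
      _ = #P * (n / z + W) := by rw [sum_const, nsmul_eq_mul]
  have hlt : #(P.biUnion bad) < #(Ioc S (S + n)) := by
    have hz' : (2 * #P : ℝ) < z := by exact_mod_cast hz
    have hW' : (2 * #P * W : ℝ) ≤ n := by exact_mod_cast hW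
    have hn' : (0 : ℝ) < n := by exact_mod_cast hn
    have : (#P : ℝ) * (n / z) < n / 2 := by
      rw [mul_div_assoc', div_lt_div_iff₀ (by linarith) two_pos]
      nlinarith
    rw [Nat.card_Ioc, Nat.add_sub_cancel_left]
    exact_mod_cast (show (#(P.biUnion bad) : ℝ) < n by nlinarith)
  obtain ⟨s, hs, hsbad⟩ := exists_mem_notMem_of_card_lt_card hlt
  exact ⟨s, hs, fun p hp ℓ hℓ hzℓ hdvd =>
    hsbad (mem_biUnion.2 ⟨p, hp, mem_filter.2 ⟨hs, ℓ, hℓ, hzℓ, hdvd⟩⟩)⟩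

lemma infinite_setOf_forall_not_prime_pow_dvd {k z M : ℕ} (hk : 2 ≤ k) (P : Finset ℤ)
    (hz : 2 * #P < z) (hM₀ : 0 < M) (hM : ∀ ℓ : ℕ, ℓ.Prime → z < ℓ → M.Coprime ℓ) (a : ℤ) :
    {s : ℕ | ∀ p ∈ P, ∀ ℓ : ℕ, ℓ.Prime → z < ℓ → ¬ (ℓ : ℤ) ^ k ∣ p + a + M * s}.Infinite := by
  refine Set.infinite_of_forall_exists_gt fun s₀ => ?_
  set A := P.sup fun p => (p + a).natAbs
  set L := 2 * #P + A + s₀ + 1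
  set K := 2 * M + 1
  set S := K * L ^ 2
  -- For `s ∈ (S, 2S]` the values `p + a + M s` lie in `(0, K S]`, and `K S = (K L)²`.
  have hLS : L ≤ S := (Nat.le_self_pow two_ne_zero L).trans (Nat.le_mul_of_pos_left _ (by omega))
  have hW : 2 * #P * (K * L) ≤ S :=
    calc 2 * #P * (K * L) = K * L * (2 * #P) := by ring
      _ ≤ K * L * L := Nat.mul_le_mul_left _ (by omega)
      _ = S := by ring
  have hbounds : ∀ p ∈ P, ∀ s ∈ Ioc S (S + S),
      0 < p + a + M * (s : ℤ) ∧ p + a + M * (s : ℤ) ≤ (K * L : ℕ) * (K * L : ℕ) := by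
    intro p hp s hs
    have hs₁ : (S : ℤ) < s := by exact_mod_cast (mem_Ioc.1 hs).1
    have hs₂ : (s : ℤ) ≤ S + S := by exact_mod_cast (mem_Ioc.1 hs).2
    have hAS : (A : ℤ) < S := by exact_mod_cast (show A < S by omega)
    have hpa : |p + a| ≤ A := by
      rw [Int.abs_eq_natAbs]
      exact_mod_cast le_sup (f := fun p => (p + a).natAbs) hp
    have hM₁ : (1 : ℤ) ≤ M := by exact_mod_cast hM₀
    have hKS : ((K * L : ℕ) : ℤ) * (K * L : ℕ) = (2 * M + 1) * S := by push_cast [S, K]; ring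
    rw [hKS]
    constructor <;> nlinarith [abs_le.1 hpa]
  obtain ⟨s, hs, hgood⟩ := exists_mem_Ioc_forall_not_prime_pow_dvd hk P hz hM a
    (by positivity) hW (fun p hp s hs => (hbounds p hp s hs).1)
    (fun p hp s hs => (hbounds p hp s hs).2)
  exact ⟨s, hgood, by have := (mem_Ioc.1 hs).1; omega⟩

/-- If for every prime `p` the residues of `P` modulo `p^k` do not cover
`ℤ/p^kℤ`, then there are infinitely many `t` such that every element of `P + t`
is `k`-free and no element of `Q + t` is `k`-free. -/
theorem infinitely_many_translates (k : ℕ) (hk : 2 ≤ k)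
    (P Q : Finset ℤ) (hPQ : Disjoint P Q)
    (hP : ∀ p : ℕ, p.Prime →
      ¬ (∀ r : ZMod (p^k), ∃ q ∈ P, (q : ZMod (p^k)) = r)) :
    {t : ℤ | (∀ p ∈ P, KFree k (p + t)) ∧ (∀ q ∈ Q, ¬ KFree k (q + t))}.Infinite := by
  set D := (P ×ˢ Q).sup fun x => (x.1 - x.2).natAbs
  obtain ⟨f, hf_inj, hf⟩ := exists_injective_prime_gt ℤ D
  have hfD : ∀ p ∈ P, ∀ q ∈ Q, (p - q).natAbs < f q := fun p hp q hq =>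
    (le_sup (f := fun x : ℤ × ℤ => (x.1 - x.2).natAbs)
      (mem_product.2 ⟨hp, hq⟩ : (p, q) ∈ P ×ˢ Q)).trans_lt (hf q).2
  set z := max (2 * #P + 1) (Q.sup f)
  obtain ⟨t₀, ht₀⟩ := exists_translate_mod_primorial_pow (by omega) hPQ hP hf_inj.injOn hfD z
  set M := primorial z ^ k
  have hM₀ : 0 < M := pow_pos (primorial_pos z) k
  have hlarge := infinite_setOf_forall_not_prime_pow_dvd hk P (z := z) (by omega) hM₀
    (fun ℓ hℓ hzℓ => (coprime_primorial_of_lt hℓ hzℓ).pow_left k) t₀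
  have hinj : Function.Injective fun s : ℕ => (t₀ : ℤ) + M * s := fun s s' h => by
    simpa [hM₀.ne'] using h
  refine (hlarge.image hinj.injOn).mono ?_
  rintro _ ⟨s, hs, rfl⟩
  refine ⟨fun p hp ℓ hℓ hdvd => ?_, fun q hq hfree => ?_⟩
  · rw [← add_assoc] at hdvd
    rcases le_or_gt ℓ z with hℓz | hℓz
    · exact (ht₀ s ℓ (mem_primesLE.2 ⟨hℓz, hℓ⟩)).1 p hp hdvd
    · exact hs p hp ℓ hℓ hℓz hdvd
  · have hfq : f q ∈ primesLE z := mem_primesLE.2 ⟨(le_sup hq).trans (le_max_right _ _), (hf q).1⟩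
    exact hfree (f q) (hf q).1 (by rw [← add_assoc]; exact (ht₀ s (f q) hfq).2 q hq rfl)
end

section
/- Let m₁, ..., m_r be natural numbers and p₁, ..., p_r integers. If the system t + p_i ≡ 0 (mod m_i) (1 ≤ i ≤ r) is solvable, then lcm(m₁, ..., m_r) ≥ (m₁ ⋯ m_r) / K where K = ∏_{i<j} |p_i − p_j| (assuming the p_i are pairwise distinct). Equivalently, 1/lcm(m₁,...,m_r) ≤ K/(m₁⋯m_r). -/
/-!
Solvability gives `gcd mᵢ mⱼ ∣ pᵢ - pⱼ`, hence `gcd mᵢ mⱼ ≤ |pᵢ - pⱼ|` once the `pᵢ` are distinct.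
The bound then follows from `∏ mⱼ ∣ lcm m * ∏_{i<j} gcd mᵢ mⱼ`, valid in any GCD monoid: adjoining
a new largest index `a` to a set with lcm `L` turns `L` into `lcm L mₐ = L * mₐ / gcd L mₐ`, and
`gcd L mₐ` divides `∏_i gcd mᵢ mₐ`.
-/

open Finset

variable {ι α : Type*}

section GCDMonoid

variable [CommMonoidWithZero α] [NormalizedGCDMonoid α]

theorem Finset.gcd_lcm_dvd_prod_gcd [DecidableEq ι] (s : Finset ι) (f : ι → α) (a : α) :
    GCDMonoid.gcd (s.lcm f) a ∣ ∏ i ∈ s, GCDMonoid.gcd (f i) a := by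
  induction s using Finset.induction with
  | empty => simp
  | insert k s hk ih =>
    rw [lcm_insert, prod_insert hk]
    calc GCDMonoid.gcd (GCDMonoid.lcm (f k) (s.lcm f)) a
        ∣ GCDMonoid.gcd (f k * s.lcm f) a := gcd_dvd_gcd (lcm_dvd_mul _ _) dvd_rfl
      _ ∣ GCDMonoid.gcd (f k) a * GCDMonoid.gcd (s.lcm f) a := by
          simpa only [gcd_comm _ a] using gcd_mul_dvd_mul_gcd a (f k) (s.lcm f)
      _ ∣ GCDMonoid.gcd (f k) a * ∏ i ∈ s, GCDMonoid.gcd (f i) a := mul_dvd_mul_left _ ih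

theorem Finset.prod_dvd_lcm_mul_prod_gcd [LinearOrder ι] (s : Finset ι) (f : ι → α) :
    ∏ j ∈ s, f j ∣ s.lcm f * ∏ j ∈ s, ∏ i ∈ s with i < j, GCDMonoid.gcd (f i) (f j) := by
  induction s using Finset.induction_on_max with
  | empty => simp
  | insert a s ha ih =>
    have ha' : a ∉ s := fun h => lt_irrefl a (ha a h)
    have h_lt_a : {i ∈ insert a s | i < a} = s := by
      rw [filter_insert, if_neg (lt_irrefl a), filter_true_of_mem ha]
    have h_inner : ∏ j ∈ s, ∏ i ∈ insert a s with i < j, GCDMonoid.gcd (f i) (f j) =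
        ∏ j ∈ s, ∏ i ∈ s with i < j, GCDMonoid.gcd (f i) (f j) :=
      prod_congr rfl fun j hj => by rw [filter_insert, if_neg (ha j hj).not_gt]
    rw [prod_insert ha', prod_insert ha', lcm_insert, h_lt_a, h_inner]
    calc f a * ∏ j ∈ s, f j
        ∣ f a * s.lcm f * ∏ j ∈ s, ∏ i ∈ s with i < j, GCDMonoid.gcd (f i) (f j) := by
          rw [mul_assoc]; exact mul_dvd_mul_left _ ih
      _ ∣ GCDMonoid.lcm (f a) (s.lcm f) * GCDMonoid.gcd (s.lcm f) (f a) *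
            ∏ j ∈ s, ∏ i ∈ s with i < j, GCDMonoid.gcd (f i) (f j) := by
          refine mul_dvd_mul_right ?_ _
          rw [mul_comm (GCDMonoid.lcm _ _), gcd_comm]
          exact (gcd_mul_lcm _ _).symm.dvd
      _ ∣ _ := by
          rw [mul_assoc]
          exact mul_dvd_mul_left _ (mul_dvd_mul_right (gcd_lcm_dvd_prod_gcd s f _) _)

end GCDMonoid

theorem Finset.prod_le_lcm_mul_prod_gcd [LinearOrder ι] (s : Finset ι) (m : ι → ℕ) :
    ∏ j ∈ s, m j ≤ s.lcm m * ∏ j ∈ s, ∏ i ∈ s with i < j, Nat.gcd (m i) (m j) := by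
  by_cases h0 : ∏ j ∈ s, m j = 0
  · exact h0 ▸ Nat.zero_le _
  have hm : ∀ i ∈ s, m i ≠ 0 := prod_ne_zero_iff.mp h0
  refine Nat.le_of_dvd (Nat.pos_of_ne_zero ?_) (prod_dvd_lcm_mul_prod_gcd s m)
  refine mul_ne_zero (by simpa [lcm_eq_zero_iff] using hm) (prod_ne_zero_iff.mpr fun j hj => ?_)
  exact prod_ne_zero_iff.mpr fun i hi => Nat.gcd_ne_zero_left (hm i (mem_filter.mp hi).1)

theorem Finset.prod_filter_fst_lt_snd [Fintype ι] [LinearOrder ι] {β : Type*} [CommMonoid β]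
    (f : ι → ι → β) :
    ∏ ij : ι × ι with ij.1 < ij.2, f ij.1 ij.2 = ∏ j, ∏ i with i < j, f i j := by
  rw [prod_filter, ← univ_product_univ, prod_product_right]
  exact prod_congr rfl fun j _ => (prod_filter _ _).symm

theorem Int.natCast_gcd_le_abs_sub {a b : ℕ} {t x y : ℤ} (ha : (a : ℤ) ∣ t + x)
    (hb : (b : ℤ) ∣ t + y) (hxy : x ≠ y) : (Nat.gcd a b : ℤ) ≤ |x - y| := by
  have hdvd : (Nat.gcd a b : ℤ) ∣ (t + x) - (t + y) :=
    dvd_sub ((Int.natCast_dvd_natCast.mpr (Nat.gcd_dvd_left a b)).trans ha)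
      ((Int.natCast_dvd_natCast.mpr (Nat.gcd_dvd_right a b)).trans hb)
  rw [add_sub_add_left_eq_sub] at hdvd
  exact Int.le_of_dvd (abs_pos.mpr (sub_ne_zero.mpr hxy)) ((dvd_abs _ _).mpr hdvd)

/-- If the system `t + pᵢ ≡ 0 (mod mᵢ)` is solvable and the `pᵢ` are pairwise
distinct, then `lcm(m₁,...,m_r) ≥ (m₁ ⋯ m_r) / K` where
`K = ∏_{i<j} |pᵢ - pⱼ|`. -/
theorem lcm_lower_bound_of_solvable (r : ℕ) (m : Fin r → ℕ) (p : Fin r → ℤ)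
    (hp : Function.Injective p)
    (hsol : ∃ t : ℤ, ∀ i, (m i : ℤ) ∣ t + p i) :
    (∏ i, (m i : ℝ)) ≤
      (∏ ij ∈ Finset.univ.filter (fun ij : Fin r × Fin r => ij.1 < ij.2),
        (|p ij.1 - p ij.2| : ℝ)) * ((Finset.univ.lcm m : ℕ) : ℝ) := by
  obtain ⟨t, ht⟩ := hsol
  rw [prod_filter_fst_lt_snd (fun i j => |(p i : ℝ) - p j|), mul_comm]
  calc (∏ i, (m i : ℝ))
      ≤ ((univ.lcm m : ℕ) : ℝ) * ∏ j, ∏ i with i < j, (Nat.gcd (m i) (m j) : ℝ) := by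
        exact_mod_cast prod_le_lcm_mul_prod_gcd univ m
    _ ≤ ((univ.lcm m : ℕ) : ℝ) * ∏ j, ∏ i with i < j, |(p i : ℝ) - p j| := by
        gcongr with j _ i hi
        exact_mod_cast Int.natCast_gcd_le_abs_sub (ht i) (ht j) (hp.ne (mem_filter.mp hi).2.ne)
end

section
/- For every natural number N, the product of all primes p ≤ N satisfies ∏_{p ≤ N} p < 4^N. -/
namespace Primorial

/-- The primorial bound: the product of all primes `p ≤ N` is less than `4^N`
(for `N ≥ 1`; for `N = 0` both sides are `1`). -/
theorem primorial_lt_four_pow (N : ℕ) (hN : 1 ≤ N) :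
    ∏ p ∈ Finset.filter Nat.Prime (Finset.range (N + 1)), p < 4^N :=
  _root_.primorial_lt_four_pow N (Nat.one_le_iff_ne_zero.mp hN)
end Primorial
end
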